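/- arXiv:2102.10155 — 2 statements merged into one kernel-verified Lean document; each statement's English description precedes it below -/
import Mathlib

section
/- Let q \ge 3, n \ge 2d, 0 \le i \le d, 1 \le j \le d, and let c = g_{h_{max}}(i,j) where h_{max} = min(i, d-j) and g_h(i,j) = -h^2/2 + h(n-d-j+1/2) + j(d-j) + i(i-1)/2 + (n-d)(j-i). If not (n = 2d and d-j \le i), then (4/9) q^c < |G_j(i)| < 4 q^c, where G_j(i) is the eigenvalue of the Grassmann graph G_q(n,d,j). -/
/-!
Write `u_h = |T_h|`. The terms `T_h` of `G_j(i)` alternate in sign, and for `q ≥ 3` each `u_{h+1}`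
is at least `8/3` times `u_h`: up to factors `1 - q^{-s} ≥ 2/3` their ratio is `q^{n-d-j-h}`, and
the exponent is at least `2` unless `n = 2d` and `h + 1 = d - j ≤ i`. An alternating sum whose
terms grow by a factor `≥ 8/3` lies between `5/8` and `1` times its last term `u_H`,
`H = min i (d - j)`. Finally `q^{l(m-l)} ≤ [m, l]_q < 2 q^{l(m-l)}`, and at `h = H` one of the
three Gaussian binomials in `u_H` is `1`, so `q^c ≤ u_H < 4 q^c`.
-/

/-- The Gaussian binomial coefficient `[m choose l]_q = ∏_{t=1}^{l} (q^{m-t+1}-1)/(q^t-1)`. -/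
def gaussBinom (q : ℚ) (m l : ℕ) : ℚ :=
  ∏ t ∈ Finset.range l, (q ^ (m - t) - 1) / (q ^ (t + 1) - 1)

/-- The `h`-th term of the eigenvalue expression for the Grassmann graph `G_q(n,d,j)`. -/
def grassT (q : ℚ) (n d i j h : ℕ) : ℚ :=
  (-1 : ℚ) ^ (i - h) * q ^ ((j : ℤ) * ((j : ℤ) - (i : ℤ) + (h : ℤ)) + ((i - h).choose 2 : ℤ)) *
    gaussBinom q i h * gaussBinom q (d - h) j * gaussBinom q (n - d - i + h) (n - d - j)

/-- The eigenvalue `G_j(i)` of the Grassmann graph `G_q(n,d,j)`. -/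
def grassG (q : ℚ) (n d j i : ℕ) : ℚ :=
  ∑ h ∈ Finset.Icc (i - j) (min i (d - j)), grassT q n d i j h

/-- The exponent `c = g_{h_max}(i,j)`, the exponent of `q` in `T_{h_max}(i,j)` when each
Gaussian binomial `[m,l]_q` is approximated by `q^{l(m-l)}`. -/
def grassC (n d i j : ℕ) : ℤ :=
  (j : ℤ) * ((j : ℤ) - (i : ℤ) + (min i (d - j) : ℤ)) + ((i - min i (d - j)).choose 2 : ℤ) +
    (min i (d - j) : ℤ) * ((i : ℤ) - (min i (d - j) : ℤ)) +
    (j : ℤ) * ((d : ℤ) - (min i (d - j) : ℤ) - (j : ℤ)) +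
    ((n : ℤ) - (d : ℤ) - (j : ℤ)) * ((min i (d - j) : ℤ) - (i : ℤ) + (j : ℤ))

open Finset

section GaussBinom

variable {q : ℚ}

theorem gaussBinom_add_left (l a : ℕ) :
    gaussBinom q (l + a) l = ∏ t ∈ range l, (q ^ (a + t + 1) - 1) / (q ^ (t + 1) - 1) := by
  rw [gaussBinom, prod_div_distrib, prod_div_distrib,
    ← prod_range_reflect (fun t => q ^ (a + t + 1) - 1) l]
  congr 1
  refine prod_congr rfl fun t ht => ?_
  rw [mem_range] at ht
  congr 2
  omega

theorem gaussBinom_self (hq : 1 < q) (l : ℕ) : gaussBinom q l l = 1 := by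
  have h := gaussBinom_add_left (q := q) l 0
  rw [add_zero] at h
  rw [h]
  refine prod_eq_one fun t _ => ?_
  rw [zero_add]
  refine div_self (sub_ne_zero.2 ?_)
  exact (one_lt_pow₀ hq t.succ_ne_zero).ne'

theorem gaussBinom_succ_right (hq : 1 < q) (m l : ℕ) :
    gaussBinom q m (l + 1) * (q ^ (l + 1) - 1) = gaussBinom q m l * (q ^ (m - l) - 1) := by
  have : q ^ (l + 1) - 1 ≠ 0 := sub_ne_zero.2 (one_lt_pow₀ hq l.succ_ne_zero).ne'
  rw [gaussBinom, prod_range_succ, ← gaussBinom]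
  field_simp

theorem gaussBinom_succ_left (hq : 1 < q) {m l : ℕ} (h : l ≤ m) :
    gaussBinom q (m + 1) l * (q ^ (m + 1 - l) - 1) = gaussBinom q m l * (q ^ (m + 1) - 1) := by
  induction l with
  | zero => simp [gaussBinom]
  | succ l ih =>
    have hne : q ^ (l + 1) - 1 ≠ 0 := sub_ne_zero.2 (one_lt_pow₀ hq l.succ_ne_zero).ne'
    have ih := ih (by omega)
    have hsucc := gaussBinom_succ_right hq (m + 1) l
    have hsucc' := gaussBinom_succ_right hq m l
    rw [show m + 1 - l = m - l + 1 by omega] at ih hsucc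
    rw [show m + 1 - (l + 1) = m - l by omega]
    apply mul_right_cancel₀ hne
    linear_combination (q ^ (m - l) - 1) * ih + (q ^ (m - l) - 1) * hsucc
      - (q ^ (m + 1) - 1) * hsucc'

theorem pow_le_gaussBinom (hq : 1 < q) {m l : ℕ} (h : l ≤ m) :
    q ^ (l * (m - l)) ≤ gaussBinom q m l := by
  obtain ⟨a, rfl⟩ := Nat.exists_eq_add_of_le h
  have hconst : q ^ (l * a) = ∏ _t ∈ range l, q ^ a := by
    rw [prod_const, card_range, ← pow_mul, mul_comm]
  rw [Nat.add_sub_cancel_left, gaussBinom_add_left, hconst]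
  refine prod_le_prod (fun _ _ => by positivity) fun t _ => ?_
  have hden : 0 < q ^ (t + 1) - 1 := sub_pos.2 (one_lt_pow₀ hq t.succ_ne_zero)
  have hqa : 1 ≤ q ^ a := one_le_pow₀ hq.le
  rw [le_div_iff₀ hden, add_assoc, pow_add q a]
  nlinarith

theorem gaussBinom_pos (hq : 1 < q) {m l : ℕ} (h : l ≤ m) : 0 < gaussBinom q m l :=
  (pow_pos (by linarith) _).trans_le (pow_le_gaussBinom hq h)

-- The induction needs this sharper form of `∏ < 2`.
theorem prod_pow_div_pow_sub_one_le (hq : 3 ≤ q) (l : ℕ) :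
    ∏ t ∈ range l, q ^ (t + 1) / (q ^ (t + 1) - 1) ≤ 2 * q ^ l / (q ^ l + 1) := by
  induction l with
  | zero => norm_num
  | succ l ih =>
    have hQ : 1 ≤ q ^ l := one_le_pow₀ (by linarith)
    have hden : 0 < q * q ^ l - 1 := by nlinarith
    rw [prod_range_succ, pow_succ']
    refine (mul_le_mul_of_nonneg_right ih (by positivity)).trans ?_
    rw [div_mul_div_comm, div_le_div_iff₀ (by positivity) (by positivity)]
    nlinarith [mul_le_mul_of_nonneg_left hq (by positivity : (0 : ℚ) ≤ q ^ l * q ^ l)]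

theorem gaussBinom_lt (hq : 3 ≤ q) {m l : ℕ} (h : l ≤ m) :
    gaussBinom q m l < 2 * q ^ (l * (m - l)) := by
  obtain ⟨a, rfl⟩ := Nat.exists_eq_add_of_le h
  have hq1 : 1 < q := by linarith
  have hfactor : ∀ t ∈ range l, (q ^ (a + t + 1) - 1) / (q ^ (t + 1) - 1)
      ≤ q ^ a * (q ^ (t + 1) / (q ^ (t + 1) - 1)) := fun t _ => by
    have hden : 0 < q ^ (t + 1) - 1 := sub_pos.2 (one_lt_pow₀ hq1 t.succ_ne_zero)
    rw [mul_div_assoc', ← pow_add, add_assoc]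
    exact div_le_div_of_nonneg_right (by linarith) hden.le
  have hql : 0 < q ^ l := by positivity
  calc gaussBinom q (l + a) l
      ≤ ∏ t ∈ range l, q ^ a * (q ^ (t + 1) / (q ^ (t + 1) - 1)) := by
        rw [gaussBinom_add_left]
        refine prod_le_prod (fun t _ => div_nonneg ?_ ?_) hfactor
        · linarith [one_le_pow₀ (n := a + t + 1) hq1.le]
        · linarith [one_le_pow₀ (n := t + 1) hq1.le]
    _ ≤ q ^ (l * a) * (2 * q ^ l / (q ^ l + 1)) := by
        rw [prod_mul_distrib, prod_const, card_range, ← pow_mul, mul_comm a]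
        gcongr
        exact prod_pow_div_pow_sub_one_le hq l
    _ < 2 * q ^ (l * (l + a - l)) := by
        rw [Nat.add_sub_cancel_left, mul_comm (2 : ℚ) (q ^ (l * a))]
        refine mul_lt_mul_of_pos_left ?_ (pow_pos (by linarith : (0 : ℚ) < q) _)
        rw [div_lt_iff₀ (by positivity)]
        linarith

theorem gaussBinom_mul_gaussBinom_lt (hq : 3 ≤ q) {m₁ l₁ m₂ l₂ : ℕ} (h₁ : l₁ ≤ m₁)
    (h₂ : l₂ ≤ m₂) (h : l₁ = m₁ ∨ l₂ = m₂) :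
    gaussBinom q m₁ l₁ * gaussBinom q m₂ l₂ < 2 * q ^ (l₁ * (m₁ - l₁) + l₂ * (m₂ - l₂)) := by
  rcases h with rfl | rfl
  · rw [gaussBinom_self (by linarith), Nat.sub_self, mul_zero, zero_add, one_mul]
    exact gaussBinom_lt hq h₂
  · rw [gaussBinom_self (by linarith), Nat.sub_self, mul_zero, add_zero, mul_one]
    exact gaussBinom_lt hq h₁

end GaussBinom

section PowSubOne

variable {q : ℚ}

theorem two_thirds_mul_pow_le_pow_sub_one (hq : 3 ≤ q) {n : ℕ} (hn : n ≠ 0) :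
    2 / 3 * q ^ n ≤ q ^ n - 1 := by
  have := hq.trans (le_self_pow₀ (by linarith) hn)
  linarith

theorem eight_mul_pow_sub_one_le_three_mul (hq : 3 ≤ q) {α β γ δ ε x y z : ℕ} (hx : x ≠ 0)
    (hy : y ≠ 0) (hz : z ≠ 0) (hexp : α + β + γ + δ + 2 ≤ ε + x + y + z) :
    8 * (q ^ α * (q ^ β - 1) * (q ^ γ - 1) * (q ^ δ - 1)) ≤
      3 * (q ^ ε * (q ^ x - 1) * (q ^ y - 1) * (q ^ z - 1)) := by
  have hq1 : 1 ≤ q := by linarith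
  have hsub : ∀ m, 0 ≤ q ^ m - 1 := fun m => sub_nonneg.2 (one_le_pow₀ hq1)
  have hgap : 9 * q ^ (α + β + γ + δ) ≤ q ^ (ε + x + y + z) := by
    calc 9 * q ^ (α + β + γ + δ) ≤ q ^ 2 * q ^ (α + β + γ + δ) := by gcongr; nlinarith
      _ ≤ q ^ (ε + x + y + z) := by rw [← pow_add]; exact pow_le_pow_right₀ hq1 (by omega)
  calc 8 * (q ^ α * (q ^ β - 1) * (q ^ γ - 1) * (q ^ δ - 1))
      ≤ 8 * (q ^ α * q ^ β * q ^ γ * q ^ δ) := by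
        gcongr ?_ * (?_ * ?_ * ?_ * ?_) <;> first | exact hsub _ | exact sub_le_self _ zero_le_one
    _ ≤ 8 / 9 * q ^ (ε + x + y + z) := by
        rw [← pow_add, ← pow_add, ← pow_add]
        linarith
    _ = 3 * (q ^ ε * (2 / 3 * q ^ x) * (2 / 3 * q ^ y) * (2 / 3 * q ^ z)) := by
        rw [pow_add, pow_add, pow_add]
        ring
    _ ≤ 3 * (q ^ ε * (q ^ x - 1) * (q ^ y - 1) * (q ^ z - 1)) := by
        have := two_thirds_mul_pow_le_pow_sub_one hq hx
        have := two_thirds_mul_pow_le_pow_sub_one hq hy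
        have := two_thirds_mul_pow_le_pow_sub_one hq hz
        have : 0 ≤ q ^ ε := by positivity
        gcongr <;> apply_rules [mul_nonneg, hsub]

end PowSubOne

theorem abs_alternating_sum_bounds {α : Type*} [Field α] [LinearOrder α] [IsStrictOrderedRing α]
    {v : ℕ → α} {θ : α} {lo M : ℕ} (hθ₀ : 0 ≤ θ) (hθ₁ : θ ≤ 1) (hlo : lo ≤ M)
    (hv : ∀ k ∈ Icc lo M, 0 ≤ v k) (hstep : ∀ k ∈ Ico lo M, v k ≤ θ * v (k + 1)) :
    (1 - θ) * v M ≤ |∑ h ∈ Icc lo M, (-1) ^ h * v h| ∧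
      |∑ h ∈ Icc lo M, (-1) ^ h * v h| ≤ v M := by
  have key : ∀ m, lo ≤ m → m ≤ M →
      (1 - θ) * v m ≤ (-1) ^ m * ∑ h ∈ Icc lo m, (-1) ^ h * v h ∧
        (-1) ^ m * ∑ h ∈ Icc lo m, (-1) ^ h * v h ≤ v m := by
    intro m hm
    induction m, hm using Nat.le_induction with
    | base =>
      intro hM
      have := hv lo (mem_Icc.2 ⟨le_rfl, hM⟩)
      simp only [Icc_self, sum_singleton, ← mul_assoc, ← pow_add, ← two_mul, pow_mul,
        neg_one_sq, one_pow, one_mul]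
      constructor <;> nlinarith
    | succ m hm ih =>
      intro hM
      obtain ⟨ihl, ihu⟩ := ih (by omega)
      have hvm := hv m (mem_Icc.2 ⟨hm, by omega⟩)
      have hstepm := hstep m (mem_Ico.2 ⟨hm, by omega⟩)
      have hflip : (-1 : α) ^ (m + 1) * ∑ h ∈ Icc lo (m + 1), (-1) ^ h * v h
          = v (m + 1) - (-1) ^ m * ∑ h ∈ Icc lo m, (-1) ^ h * v h := by
        rw [sum_Icc_succ_top (by omega), mul_add, ← mul_assoc, ← pow_add, ← two_mul, pow_mul,
          neg_one_sq, one_pow, one_mul, pow_succ]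
        ring
      rw [hflip]
      constructor <;> nlinarith
  obtain ⟨hlow, hupp⟩ := key M hlo le_rfl
  have hsign : |∑ h ∈ Icc lo M, (-1) ^ h * v h|
      = (-1) ^ M * ∑ h ∈ Icc lo M, (-1) ^ h * v h := by
    rw [← abs_of_nonneg ((mul_nonneg (by linarith) (hv M (right_mem_Icc.2 hlo))).trans hlow), abs_mul,
      abs_neg_one_pow, one_mul]
  rw [hsign]
  exact ⟨hlow, hupp⟩

section GrassmannTerms

variable {q : ℚ}

/-- The absolute value of `grassT q n d i j h` on the summation range `i - j ≤ h ≤ i`, where the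
exponent of `q` in `grassT` is the natural number `j * (j + h - i) + (i - h).choose 2`. -/
def grassU (q : ℚ) (n d i j h : ℕ) : ℚ :=
  q ^ (j * (j + h - i) + (i - h).choose 2) * gaussBinom q i h * gaussBinom q (d - h) j *
    gaussBinom q (n - d - i + h) (n - d - j)

theorem neg_one_pow_sub_eq_mul {R : Type*} [CommMonoid R] [HasDistribNeg R] {h i : ℕ}
    (hh : h ≤ i) : (-1 : R) ^ (i - h) = (-1) ^ i * (-1) ^ h := by
  obtain ⟨c, rfl⟩ := Nat.exists_eq_add_of_le hh
  rw [Nat.add_sub_cancel_left, pow_add, mul_right_comm, ← pow_add, ← two_mul, pow_mul,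
    neg_one_sq, one_pow, one_mul]

theorem grassT_eq_grassU {n d i j h : ℕ} (hh : h ≤ i) (hih : i ≤ j + h) :
    grassT q n d i j h = (-1) ^ i * ((-1) ^ h * grassU q n d i j h) := by
  have hexp : (j : ℤ) * ((j : ℤ) - (i : ℤ) + (h : ℤ)) + ((i - h).choose 2 : ℤ)
      = ((j * (j + h - i) + (i - h).choose 2 : ℕ) : ℤ) := by
    push_cast [Nat.cast_sub hih]
    ring
  rw [grassT, grassU, hexp, zpow_natCast, neg_one_pow_sub_eq_mul hh]
  ring

theorem grassU_pos (hq : 1 < q) {n d i j h : ℕ} (hh : h ≤ i) (hhd : h + j ≤ d)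
    (hih : i ≤ j + h) (hn : d + j ≤ n) : 0 < grassU q n d i j h := by
  have : 0 < q := by linarith
  have := gaussBinom_pos hq hh
  have := gaussBinom_pos (q := q) hq (m := d - h) (l := j) (by omega)
  have := gaussBinom_pos (q := q) hq (m := n - d - i + h) (l := n - d - j) (by omega)
  unfold grassU
  positivity

-- Each Gaussian binomial contributes one factor, through its Pascal-type recurrence.
theorem grassU_succ_mul (hq : 1 < q) {n d i j k : ℕ} (hik : i ≤ k + j) (hki : k + 1 ≤ i)
    (hkd : k + 1 + j ≤ d) (hni : d + i ≤ n) (hnj : d + j ≤ n) :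
    grassU q n d i j (k + 1) *
        (q ^ (i - (k + 1)) * (q ^ (k + 1) - 1) * (q ^ (d - k) - 1) * (q ^ (j + k + 1 - i) - 1)) =
      grassU q n d i j k *
        (q ^ j * (q ^ (i - k) - 1) * (q ^ (d - k - j) - 1) * (q ^ (n - d - i + k + 1) - 1)) := by
  have hpow : q ^ (j * (j + (k + 1) - i) + (i - (k + 1)).choose 2) * q ^ (i - (k + 1))
      = q ^ (j * (j + k - i) + (i - k).choose 2) * q ^ j := by
    obtain ⟨a, rfl⟩ := Nat.exists_eq_add_of_le hki
    obtain ⟨w, rfl⟩ : ∃ w, j = a + 1 + w := ⟨j - a - 1, by omega⟩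
    rw [← pow_add, ← pow_add]
    congr 1
    rw [show k + 1 + a - (k + 1) = a by omega, show k + 1 + a - k = a + 1 by omega,
      show a + 1 + w + (k + 1) - (k + 1 + a) = w + 1 by omega,
      show a + 1 + w + k - (k + 1 + a) = w by omega, Nat.choose_succ_succ', Nat.choose_one_right]
    ring
  have hleft := gaussBinom_succ_right hq i k
  have hmid := gaussBinom_succ_left hq (m := d - (k + 1)) (l := j) (by omega)
  have hright := gaussBinom_succ_left hq (m := n - d - i + k) (l := n - d - j) (by omega)
  rw [show d - (k + 1) + 1 = d - k by omega] at hmid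
  rw [show n - d - i + k + 1 - (n - d - j) = j + k + 1 - i by omega] at hright
  calc _ = (q ^ (j * (j + (k + 1) - i) + (i - (k + 1)).choose 2) * q ^ (i - (k + 1))) *
          (gaussBinom q i (k + 1) * (q ^ (k + 1) - 1)) *
          (gaussBinom q (d - (k + 1)) j * (q ^ (d - k) - 1)) *
          (gaussBinom q (n - d - i + k + 1) (n - d - j) * (q ^ (j + k + 1 - i) - 1)) := by
        rw [grassU, show n - d - i + (k + 1) = n - d - i + k + 1 from rfl]
        ring
    _ = (q ^ (j * (j + k - i) + (i - k).choose 2) * q ^ j) *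
          (gaussBinom q i k * (q ^ (i - k) - 1)) *
          (gaussBinom q (d - k) j * (q ^ (d - k - j) - 1)) *
          (gaussBinom q (n - d - i + k) (n - d - j) * (q ^ (n - d - i + k + 1) - 1)) := by
        rw [hpow, hleft, ← hmid, hright]
    _ = _ := by unfold grassU; ring

theorem grassU_ratio (hq : 3 ≤ q) {n d i j k : ℕ} (hik : i ≤ k + j) (hki : k + 1 ≤ i)
    (hkd : k + 1 + j ≤ d) (hn : d + j + k + 2 ≤ n) :
    8 * grassU q n d i j k ≤ 3 * grassU q n d i j (k + 1) := by
  have hq1 : 1 < q := by linarith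
  set D := q ^ (i - (k + 1)) * (q ^ (k + 1) - 1) * (q ^ (d - k) - 1) * (q ^ (j + k + 1 - i) - 1)
  set N := q ^ j * (q ^ (i - k) - 1) * (q ^ (d - k - j) - 1) * (q ^ (n - d - i + k + 1) - 1)
  have hD : 0 < D := by
    have h₁ := sub_pos.2 (one_lt_pow₀ hq1 (n := k + 1) (by omega))
    have h₂ := sub_pos.2 (one_lt_pow₀ hq1 (n := d - k) (by omega))
    have h₃ := sub_pos.2 (one_lt_pow₀ hq1 (n := j + k + 1 - i) (by omega))
    have : 0 < q ^ (i - (k + 1)) := by positivity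
    positivity
  have hDN : 8 * D ≤ 3 * N := by
    refine eight_mul_pow_sub_one_le_three_mul hq ?_ ?_ ?_ ?_ <;> omega
  have hrec := grassU_succ_mul hq1 hik hki hkd (n := n) (by omega) (by omega)
  have hu := (grassU_pos hq1 (n := n) (d := d) (i := i) (j := j) (h := k)
    (by omega) (by omega) (by omega) (by omega)).le
  refine le_of_mul_le_mul_right ?_ hD
  calc 8 * grassU q n d i j k * D = grassU q n d i j k * (8 * D) := by ring
    _ ≤ grassU q n d i j k * (3 * N) := mul_le_mul_of_nonneg_left hDN hu
    _ = 3 * grassU q n d i j (k + 1) * D := by linear_combination -3 * hrec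

theorem grassU_min_bounds (hq : 3 ≤ q) {n d i j : ℕ} (hn : 2 * d ≤ n) (hi : i ≤ d)
    (hj : j ≤ d) :
    q ^ grassC n d i j ≤ grassU q n d i j (min i (d - j)) ∧
      grassU q n d i j (min i (d - j)) < 4 * q ^ grassC n d i j := by
  have hq1 : 1 < q := by linarith
  set H := min i (d - j) with hH
  have hHZ : min (i : ℤ) ((d : ℤ) - (j : ℤ)) = H := by omega
  have hexp : grassC n d i j = (((j * (j + H - i) + (i - H).choose 2) +
      (H * (i - H) + j * (d - H - j)) + (n - d - j) * (n - d - i + H - (n - d - j)) : ℕ) : ℤ) := by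
    have e₁ : ((j + H - i : ℕ) : ℤ) = j + H - i := by omega
    have e₂ : ((i - H : ℕ) : ℤ) = i - H := by omega
    have e₃ : ((d - H - j : ℕ) : ℤ) = d - H - j := by omega
    have e₄ : ((n - d - j : ℕ) : ℤ) = n - d - j := by omega
    have e₅ : ((n - d - i + H - (n - d - j) : ℕ) : ℤ) = H - i + j := by omega
    rw [grassC, hHZ, ← hH]
    push_cast [e₁, e₂, e₃, e₄, e₅]
    ring
  rw [hexp, zpow_natCast, pow_add, pow_add]
  have hU : grassU q n d i j H = q ^ (j * (j + H - i) + (i - H).choose 2) *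
      (gaussBinom q i H * gaussBinom q (d - H) j) * gaussBinom q (n - d - i + H) (n - d - j) := by
    rw [grassU, mul_assoc _ (gaussBinom q i H)]
  have hE : 0 < q ^ (j * (j + H - i) + (i - H).choose 2) := by positivity
  have hlow₁ := pow_le_gaussBinom hq1 (m := i) (l := H) (by omega)
  have hlow₂ := pow_le_gaussBinom hq1 (m := d - H) (l := j) (by omega)
  have hlow₃ := pow_le_gaussBinom hq1 (m := n - d - i + H) (l := n - d - j) (by omega)
  have hupp₁₂ := gaussBinom_mul_gaussBinom_lt hq (m₁ := i) (l₁ := H) (m₂ := d - H) (l₂ := j)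
    (by omega) (by omega) (by omega)
  have hupp₃ := gaussBinom_lt hq (m := n - d - i + H) (l := n - d - j) (by omega)
  have hpos₁ := gaussBinom_pos hq1 (m := i) (l := H) (by omega)
  have hpos₁₂ := mul_pos hpos₁ (gaussBinom_pos hq1 (m := d - H) (l := j) (by omega))
  rw [hU]
  constructor
  · rw [pow_add q (H * (i - H))]
    gcongr
  · calc _ < q ^ (j * (j + H - i) + (i - H).choose 2) *
          ((2 * q ^ (H * (i - H) + j * (d - H - j))) *
            (2 * q ^ ((n - d - j) * (n - d - i + H - (n - d - j))))) := by
          rw [mul_assoc]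
          exact mul_lt_mul_of_pos_left (mul_lt_mul'' hupp₁₂ hupp₃ hpos₁₂.le
            (gaussBinom_pos hq1 (by omega)).le) hE
      _ = _ := by ring

end GrassmannTerms

theorem grassG_bounds_general (q n d i j : ℕ) (hq : 3 ≤ q) (hn : 2 * d ≤ n)
    (hi : i ≤ d) (hj2 : j ≤ d) (hcond : ¬(n = 2 * d ∧ d ≤ i + j)) :
    (4 / 9 : ℚ) * (q : ℚ) ^ grassC n d i j < |grassG (q : ℚ) n d j i| ∧
    |grassG (q : ℚ) n d j i| < 4 * (q : ℚ) ^ grassC n d i j := by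
  have hq' : (3 : ℚ) ≤ q := by exact_mod_cast hq
  set H := min i (d - j)
  have hterm : ∀ h ∈ Icc (i - j) H,
      grassT q n d i j h = (-1) ^ i * ((-1) ^ h * grassU q n d i j h) := fun h hh => by
    rw [mem_Icc] at hh
    exact grassT_eq_grassU (by omega) (by omega)
  have hnonneg : ∀ h ∈ Icc (i - j) H, 0 ≤ grassU (q : ℚ) n d i j h := fun h hh => by
    rw [mem_Icc] at hh
    exact (grassU_pos (by linarith) (by omega) (by omega) (by omega) (by omega)).le
  have hgrowth : ∀ k ∈ Ico (i - j) H,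
      grassU (q : ℚ) n d i j k ≤ 3 / 8 * grassU q n d i j (k + 1) := fun k hk => by
    rw [mem_Ico] at hk
    linarith [grassU_ratio hq' (n := n) (d := d) (i := i) (j := j) (k := k)
      (by omega) (by omega) (by omega) (by omega)]
  obtain ⟨hlow, hupp⟩ :=
    abs_alternating_sum_bounds (by norm_num) (by norm_num) (by omega) hnonneg hgrowth
  obtain ⟨hcl, hcu⟩ := grassU_min_bounds hq' hn hi hj2
  have : (0 : ℚ) < (q : ℚ) ^ grassC n d i j := by positivity
  rw [grassG, sum_congr rfl hterm, ← mul_sum, abs_mul, abs_neg_one_pow, one_mul]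
  constructor <;> linarith

theorem grassG_bounds (q n d i j : ℕ) (hq : 3 ≤ q) (hn : 2 * d ≤ n)
    (hi : i ≤ d) (hj1 : 1 ≤ j) (hj2 : j ≤ d) (hcond : ¬(n = 2 * d ∧ d ≤ i + j)) :
    (4 / 9 : ℚ) * (q : ℚ) ^ grassC n d i j < |grassG (q : ℚ) n d j i| ∧
    |grassG (q : ℚ) n d j i| < 4 * (q : ℚ) ^ grassC n d i j :=
  grassG_bounds_general q n d i j hq hn hi hj2 hcond
end

section
/- Let q \ge 3 or (q = 2 and d \ne e), with d \le e. Then for all 0 \le i \le d and 1 \le j \le d, the eigenvalue B_j(i) of the bilinear forms graph H_q(d,e,j) has sign (-1)^{max(0, j+i-d)}, and satisfies |T_{h_{max}}(i,j)| - |T_{h_{max}-1}(i,j)| \le |B_j(i)| \le |T_{h_{max}}(i,j)|, where T_h(i,j) = (-1)^{j-h} q^{eh + \binom{j-h}{2}} [d-h choose d-j]_q [d-i choose h]_q, h_{max} = min(j, d-i), and T_{-1} = 0. -/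
/-- The `h`-th term of the eigenvalue expression for the bilinear forms graph `H_q(d,e,j)`:
`T_h(i,j) = (-1)^{j-h} q^{eh + C(j-h,2)} [d-h, d-j]_q [d-i, h]_q`. -/
def bilinT (q : ℚ) (d e j i h : ℕ) : ℚ :=
  (-1 : ℚ) ^ (j - h) * q ^ (e * h + (j - h).choose 2) *
    gaussBinom q (d - h) (d - j) * gaussBinom q (d - i) h

/-- The eigenvalue `B_j(i)` of the bilinear forms graph `H_q(d,e,j)`. -/
def bilinB (q : ℚ) (d e j i : ℕ) : ℚ :=
  ∑ h ∈ Finset.range (min j (d - i) + 1), bilinT q d e j i h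

/-!
The sign of `T_h` is `(-1)^(j-h)`, and `p_h = |T_h|` is strictly increasing for
`h ≤ m = min j (d - i)`: the ratio
`|T_{h+1}| / |T_h| = q^(e-j+h+1) (q^(j-h) - 1) (q^(d-i-h) - 1) / ((q^(d-h) - 1) (q^(h+1) - 1))`
exceeds `1`, because the denominator is below `q^(d+1)` while the numerator is at least
`q^(e+d-i-h-1) (q-1)^2 ≥ q^(d+1)`; the last inequality is where `q ≥ 3` or `q = 2, d < e` is
needed. So `B_j(i)` is, up to the sign `(-1)^(j-m)`, an alternating sum `s_m = p_m - p_(m-1) + ⋯`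
of a positive increasing sequence, and `s_m = p_m - s_(m-1)` gives `0 < s_m` and
`p_m - p_(m-1) ≤ s_m ≤ p_m`.
-/

open Finset

section AlternatingSum

variable {R : Type*} [CommRing R]

theorem alternating_sum_range_succ (p : ℕ → R) (n : ℕ) :
    ∑ h ∈ range (n + 2), (-1) ^ (n + 1 - h) * p h =
      p (n + 1) - ∑ h ∈ range (n + 1), (-1) ^ (n - h) * p h := by
  rw [sum_range_succ, Nat.sub_self, pow_zero, one_mul, sub_eq_neg_add, ← sum_neg_distrib]
  congr 1
  refine sum_congr rfl fun h hh => ?_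
  rw [Nat.sub_add_comm (mem_range_succ_iff.1 hh), pow_succ]
  ring

variable [LinearOrder R] [IsStrictOrderedRing R] {p : ℕ → R} {n : ℕ}

theorem alternating_sum_pos_and_le (hp0 : 0 < p 0) (hp : ∀ h < n, p h < p (h + 1)) :
    0 < ∑ h ∈ range (n + 1), (-1) ^ (n - h) * p h ∧
      ∑ h ∈ range (n + 1), (-1) ^ (n - h) * p h ≤ p n := by
  induction n with
  | zero => simpa using hp0
  | succ n ih =>
    obtain ⟨hpos, hle⟩ := ih fun h hh => hp h (by omega)
    have hlt := hp n n.lt_succ_self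
    rw [alternating_sum_range_succ]
    constructor <;> linarith

theorem sub_le_alternating_sum (hp0 : 0 < p 0) (hp : ∀ h < n, p h < p (h + 1)) :
    p n - (if n = 0 then 0 else p (n - 1)) ≤ ∑ h ∈ range (n + 1), (-1) ^ (n - h) * p h := by
  cases n with
  | zero => simp
  | succ n =>
    rw [alternating_sum_range_succ, if_neg n.succ_ne_zero, Nat.add_sub_cancel]
    exact sub_le_sub_left (alternating_sum_pos_and_le hp0 fun h hh => hp h (by omega)).2 _

end AlternatingSum

section PowerBounds

variable {R : Type*} [CommRing R] [LinearOrder R] [IsStrictOrderedRing R] {Q : R}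

theorem pow_sub_one_mul_pow_sub_one_lt (hQ : 1 ≤ Q) (a b : ℕ) :
    (Q ^ a - 1) * (Q ^ b - 1) < Q ^ (a + b) := by
  have ha := one_le_pow₀ hQ (n := a)
  have hb := one_le_pow₀ hQ (n := b)
  rw [pow_add]
  nlinarith

theorem pow_add_mul_sub_one_sq_le (hQ : 1 ≤ Q) (a b : ℕ) :
    Q ^ (a + b) * (Q - 1) ^ 2 ≤ (Q ^ (a + 1) - 1) * (Q ^ (b + 1) - 1) := by
  have key (c : ℕ) : 0 ≤ Q ^ c * (Q - 1) ∧ Q ^ c * (Q - 1) ≤ Q ^ (c + 1) - 1 := by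
    have := one_le_pow₀ hQ (n := c)
    constructor
    · exact mul_nonneg (by linarith) (by linarith)
    · rw [pow_succ]; linarith
  calc Q ^ (a + b) * (Q - 1) ^ 2 = (Q ^ a * (Q - 1)) * (Q ^ b * (Q - 1)) := by ring
    _ ≤ _ := mul_le_mul (key a).2 (key b).2 (key b).1 ((key a).1.trans (key a).2)

end PowerBounds

theorem pow_succ_le_pow_mul_sub_one_sq {q d E : ℕ} (hq : 3 ≤ q ∨ q = 2 ∧ d < E)
    (hdE : d ≤ E) :
    (q : ℚ) ^ (d + 1) ≤ (q : ℚ) ^ E * ((q : ℚ) - 1) ^ 2 := by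
  rcases hq with hq3 | ⟨rfl, hdE'⟩
  · have hq3' : (3 : ℚ) ≤ q := by exact_mod_cast hq3
    rw [pow_succ]
    exact mul_le_mul (pow_le_pow_right₀ (by linarith) hdE) (by nlinarith) (by linarith)
      (by positivity)
  · norm_num
    exact pow_le_pow_right₀ (by norm_num) hdE'

theorem gaussBinom_pos_s9 {Q : ℚ} (hQ : 1 < Q) {m l : ℕ} (hlm : l ≤ m) : 0 < gaussBinom Q m l :=
  prod_pos fun t ht => div_pos (sub_pos.2 (one_lt_pow₀ hQ (by grind)))
    (sub_pos.2 (one_lt_pow₀ hQ t.succ_ne_zero))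

theorem gaussBinom_succ_mul {Q : ℚ} (hQ : 1 < Q) (m l : ℕ) :
    gaussBinom Q m (l + 1) * (Q ^ (l + 1) - 1) = gaussBinom Q m l * (Q ^ (m - l) - 1) := by
  have : Q ^ (l + 1) - 1 ≠ 0 := (sub_pos.2 (one_lt_pow₀ hQ l.succ_ne_zero)).ne'
  rw [gaussBinom, prod_range_succ, ← gaussBinom]
  field_simp

theorem gaussBinom_sub_one_mul (Q : ℚ) (m l : ℕ) :
    gaussBinom Q (m - 1) l * (Q ^ m - 1) = gaussBinom Q m l * (Q ^ (m - l) - 1) := by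
  simp only [gaussBinom, prod_div_distrib, div_mul_eq_mul_div]
  congr 1
  rw [← prod_range_succ (fun t => Q ^ (m - t) - 1), prod_range_succ']
  exact congrArg (· * _) (prod_congr rfl fun t _ => by congr 2; omega)

def bilinTAbs (q : ℚ) (d e j i h : ℕ) : ℚ :=
  q ^ (e * h + (j - h).choose 2) * gaussBinom q (d - h) (d - j) * gaussBinom q (d - i) h

theorem bilinT_eq_neg_one_pow_mul (q : ℚ) (d e j i h : ℕ) :
    bilinT q d e j i h = (-1) ^ (j - h) * bilinTAbs q d e j i h := by
  simp only [bilinT, bilinTAbs, mul_assoc]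

theorem bilinTAbs_pos {Q : ℚ} (hQ : 1 < Q) {d e j i h : ℕ} (hjd : j ≤ d) (hhj : h ≤ j)
    (hhi : h ≤ d - i) : 0 < bilinTAbs Q d e j i h :=
  mul_pos (mul_pos (pow_pos (by linarith) _) (gaussBinom_pos_s9 hQ (by omega)))
    (gaussBinom_pos_s9 hQ hhi)

theorem abs_bilinT {Q : ℚ} (hQ : 1 < Q) {d e j i h : ℕ} (hjd : j ≤ d) (hhj : h ≤ j)
    (hhi : h ≤ d - i) : |bilinT Q d e j i h| = bilinTAbs Q d e j i h := by
  rw [bilinT_eq_neg_one_pow_mul, abs_mul, abs_neg_one_pow, one_mul,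
    abs_of_pos (bilinTAbs_pos hQ hjd hhj hhi)]

theorem bilinTAbs_succ_mul {Q : ℚ} (hQ : 1 < Q) {d e j i h : ℕ} (hje : j ≤ e) (hjd : j ≤ d)
    (hhj : h < j) :
    bilinTAbs Q d e j i (h + 1) * ((Q ^ (d - h) - 1) * (Q ^ (h + 1) - 1)) =
      bilinTAbs Q d e j i h *
        (Q ^ (e - j + h + 1) * ((Q ^ (j - h) - 1) * (Q ^ (d - i - h) - 1))) := by
  obtain ⟨k, hk⟩ : ∃ k, j - h = k + 1 := ⟨j - h - 1, by omega⟩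
  have hexp :
      e * (h + 1) + (j - (h + 1)).choose 2 = e * h + (j - h).choose 2 + (e - j + h + 1) := by
    rw [hk, Nat.choose_succ_succ, Nat.choose_one_right, show j - (h + 1) = k by omega]
    grind
  have hfirst : gaussBinom Q (d - (h + 1)) (d - j) * (Q ^ (d - h) - 1) =
      gaussBinom Q (d - h) (d - j) * (Q ^ (j - h) - 1) := by
    rw [show d - (h + 1) = d - h - 1 by omega, gaussBinom_sub_one_mul,
      show d - h - (d - j) = j - h by omega]
  calc bilinTAbs Q d e j i (h + 1) * ((Q ^ (d - h) - 1) * (Q ^ (h + 1) - 1))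
      = Q ^ (e * (h + 1) + (j - (h + 1)).choose 2) *
          (gaussBinom Q (d - (h + 1)) (d - j) * (Q ^ (d - h) - 1)) *
          (gaussBinom Q (d - i) (h + 1) * (Q ^ (h + 1) - 1)) := by
        rw [bilinTAbs]; ring
    _ = _ := by
        rw [hexp, hfirst, gaussBinom_succ_mul hQ, pow_add, bilinTAbs]; ring

theorem bilin_ratio_lt {q d e j i h : ℕ} (hq : 3 ≤ q ∨ (q = 2 ∧ d ≠ e)) (hde : d ≤ e)
    (hhj : h < j) (hhi : h < d - i) :
    ((q : ℚ) ^ (d - h) - 1) * ((q : ℚ) ^ (h + 1) - 1) <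
      (q : ℚ) ^ (e - j + h + 1) *
        (((q : ℚ) ^ (j - h) - 1) * ((q : ℚ) ^ (d - i - h) - 1)) := by
  have hQ : (1 : ℚ) ≤ q := by exact_mod_cast (by omega : 1 ≤ q)
  obtain ⟨a, ha⟩ : ∃ a, j - h = a + 1 := ⟨j - h - 1, by omega⟩
  obtain ⟨b, hb⟩ : ∃ b, d - i - h = b + 1 := ⟨d - i - h - 1, by omega⟩
  calc ((q : ℚ) ^ (d - h) - 1) * ((q : ℚ) ^ (h + 1) - 1)
      < (q : ℚ) ^ (d + 1) := by
        simpa [show d - h + (h + 1) = d + 1 by omega] using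
          pow_sub_one_mul_pow_sub_one_lt hQ (d - h) (h + 1)
    _ ≤ (q : ℚ) ^ (e - j + h + 1 + (a + b)) * ((q : ℚ) - 1) ^ 2 :=
        pow_succ_le_pow_mul_sub_one_sq (hq.imp_right fun h2 => ⟨h2.1, by omega⟩) (by omega)
    _ ≤ _ := by
        rw [pow_add, mul_assoc, ha, hb]
        exact mul_le_mul_of_nonneg_left (pow_add_mul_sub_one_sq_le hQ a b) (by positivity)

theorem bilinTAbs_lt_succ {q d e j i h : ℕ} (hq : 3 ≤ q ∨ (q = 2 ∧ d ≠ e)) (hde : d ≤ e)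
    (hjd : j ≤ d) (hhj : h < j) (hhi : h < d - i) :
    bilinTAbs q d e j i h < bilinTAbs q d e j i (h + 1) := by
  have hQ : (1 : ℚ) < q := by exact_mod_cast (by omega : 1 < q)
  have hden : 0 < ((q : ℚ) ^ (d - h) - 1) * ((q : ℚ) ^ (h + 1) - 1) :=
    mul_pos (sub_pos.2 (one_lt_pow₀ hQ (by omega))) (sub_pos.2 (one_lt_pow₀ hQ (by omega)))
  refine lt_of_mul_lt_mul_right ?_ hden.le
  rw [bilinTAbs_succ_mul hQ (hjd.trans hde) hjd hhj]
  exact mul_lt_mul_of_pos_left (bilin_ratio_lt hq hde hhj hhi)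
    (bilinTAbs_pos hQ hjd hhj.le hhi.le)

theorem bilinB_eq_neg_one_pow_mul_alternating_sum (q : ℚ) (d e j i : ℕ) :
    bilinB q d e j i = (-1) ^ (j - min j (d - i)) *
      ∑ h ∈ range (min j (d - i) + 1),
        (-1) ^ (min j (d - i) - h) * bilinTAbs q d e j i h := by
  rw [bilinB, mul_sum]
  refine sum_congr rfl fun h hh => ?_
  have hhm := mem_range_succ_iff.1 hh
  rw [bilinT_eq_neg_one_pow_mul, ← mul_assoc, ← pow_add]
  congr 2
  omega

theorem bilinB_main_term_bounds_general (q d e i j : ℕ) (hde : d ≤ e)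
    (hq : 3 ≤ q ∨ (q = 2 ∧ d ≠ e)) (hi : i ≤ d) (hj2 : j ≤ d) :
    (|bilinT (q : ℚ) d e j i (min j (d - i))| -
        (if min j (d - i) = 0 then 0 else |bilinT (q : ℚ) d e j i (min j (d - i) - 1)|) ≤
      |bilinB (q : ℚ) d e j i|) ∧
    |bilinB (q : ℚ) d e j i| ≤ |bilinT (q : ℚ) d e j i (min j (d - i))| ∧
    0 < bilinB (q : ℚ) d e j i * (-1 : ℚ) ^ (j + i - d) := by
  set m := min j (d - i) with hm
  have hQ : (1 : ℚ) < q := by exact_mod_cast (by omega : 1 < q)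
  have hp0 : 0 < bilinTAbs q d e j i 0 := bilinTAbs_pos hQ hj2 (Nat.zero_le _) (Nat.zero_le _)
  have hmono : ∀ h < m, bilinTAbs q d e j i h < bilinTAbs q d e j i (h + 1) :=
    fun h hh => bilinTAbs_lt_succ hq hde hj2 (by omega) (by omega)
  have habsT : ∀ h ≤ m, |bilinT q d e j i h| = bilinTAbs q d e j i h :=
    fun h hh => abs_bilinT hQ hj2 (by omega) (by omega)
  obtain ⟨hpos, hle⟩ := alternating_sum_pos_and_le hp0 hmono
  have hB := bilinB_eq_neg_one_pow_mul_alternating_sum (q : ℚ) d e j i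
  have habsB :
      |bilinB q d e j i| = ∑ h ∈ range (m + 1), (-1) ^ (m - h) * bilinTAbs q d e j i h := by
    rw [hB, abs_mul, abs_neg_one_pow, one_mul, abs_of_pos hpos]
  refine ⟨?_, ?_, ?_⟩
  · rw [habsB, habsT m le_rfl, ite_congr rfl (fun _ => rfl) fun _ => habsT _ (m.sub_le 1)]
    exact sub_le_alternating_sum hp0 hmono
  · rw [habsB, habsT m le_rfl]
    exact hle
  · rw [hB, show j + i - d = j - m by omega, mul_right_comm, ← pow_add, ← two_mul, pow_mul]
    simpa using hpos

theorem bilinB_main_term_bounds (q d e i j : ℕ) (hde : d ≤ e)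
    (hq : 3 ≤ q ∨ (q = 2 ∧ d ≠ e)) (hi : i ≤ d) (hj1 : 1 ≤ j) (hj2 : j ≤ d) :
    (|bilinT (q : ℚ) d e j i (min j (d - i))| -
        (if min j (d - i) = 0 then 0 else |bilinT (q : ℚ) d e j i (min j (d - i) - 1)|) ≤
      |bilinB (q : ℚ) d e j i|) ∧
    |bilinB (q : ℚ) d e j i| ≤ |bilinT (q : ℚ) d e j i (min j (d - i))| ∧
    0 < bilinB (q : ℚ) d e j i * (-1 : ℚ) ^ (j + i - d) :=
  bilinB_main_term_bounds_general q d e i j hde hq hi hj2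
end
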